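/- Let I be a nonzero ideal of E and write k{τ}I = k{τ}u_I. Then: (1) u_I O_I u_I⁻¹ ⊆ End_k(I*φ), where O_I := { g ∈ D : Ig ⊆ I } is the order of I; (2) if I is a kernel ideal, then u_I O_I u_I⁻¹ = End_k(I*φ). -/

import Mathlib

/- Framework: Drinfeld modules over a finite A-field `k`, realized concretely.
`k{τ}` is the subring of additive endomorphisms of an algebraic closure of `k`
generated by the `q`-power Frobenius `τ` and multiplications by elements of `k`. -/

open Polynomial

noncomputable section

namespace Drinfeld

variable (p m : ℕ) [Fact p.Prime]
variable (Fq k : Type) [Field Fq] [Fintype Fq] [Field k] [Fintype k] [CharP k p]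

/-- A fixed algebraic closure of `k`. -/
abbrev Kb := AlgebraicClosure k

variable (hFq : Fintype.card Fq = p ^ m)

/-- The `q`-power Frobenius `τ : x ↦ x^q` as an additive endomorphism of `Kb k`. -/
def tau : AddMonoid.End (Kb k) where
  toFun x := x ^ Fintype.card Fq
  map_zero' := zero_pow Fintype.card_ne_zero
  map_add' x y := by
    haveI : CharP (Kb k) p :=
      charP_of_injective_algebraMap (algebraMap k (Kb k)).injective p
    simp only [hFq]
    exact add_pow_char_pow x y p m

/-- Multiplication by `c ∈ k` as an additive endomorphism of `Kb k`. -/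
def ml (c : k) : AddMonoid.End (Kb k) :=
  AddMonoidHom.mulLeft (algebraMap k (Kb k) c)

/-- The twisted polynomial ring `k{τ}`. -/
def skewPoly : Subring (AddMonoid.End (Kb k)) :=
  Subring.closure (insert (tau p m Fq k hFq) (Set.range (ml k)))

/-- The additive endomorphism `Σᵢ cᵢ ∘ τ^i` attached to a finitely supported
family of coefficients `c : ℕ →₀ k`. -/
def ofCoeffs (c : ℕ →₀ k) : AddMonoid.End (Kb k) :=
  c.sum fun i a => ml k a * tau p m Fq k hFq ^ i

/-- A Drinfeld module of rank `r` over the `A`-field `(k, γ)`: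
a ring homomorphism `φ : A = Fq[T] → k{τ}` with
`φ_a = γ(a) + g₁(a) τ + ⋯ + g_{r·deg a}(a) τ^{r·deg a}` and `g_{r · deg a}(a) ≠ 0`. -/
structure DrinfeldModule (γ : Polynomial Fq →+* k) (r : ℕ) : Type where
  toRingHom : Polynomial Fq →+* AddMonoid.End (Kb k)
  coeffs : Polynomial Fq → ℕ →₀ k
  eq_ofCoeffs : ∀ a, toRingHom a = ofCoeffs p m Fq k hFq (coeffs a)
  coeff_zero : ∀ a, coeffs a 0 = γ a
  coeff_top : ∀ a, a ≠ 0 → coeffs a (r * a.natDegree) ≠ 0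
  coeff_eq_zero : ∀ a i, r * a.natDegree < i → coeffs a i = 0

variable {γ : Polynomial Fq →+* k} {r : ℕ}

/-- The endomorphism ring `End_k(φ)`: the centralizer of `φ(A)` in `k{τ}`. -/
def EndRing (φ : DrinfeldModule p m Fq k hFq γ r) : Subring (AddMonoid.End (Kb k)) :=
  skewPoly p m Fq k hFq ⊓ Subring.centralizer (Set.range ⇑φ.toRingHom)

/-- `u` is an isogeny `φ → ψ`: a nonzero element of `k{τ}` with `u φ_a = ψ_a u`. -/
def IsIsogeny (φ ψ : DrinfeldModule p m Fq k hFq γ r) (u : AddMonoid.End (Kb k)) : Prop :=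
  u ≠ 0 ∧ u ∈ skewPoly p m Fq k hFq ∧ ∀ a, u * φ.toRingHom a = ψ.toRingHom a * u

/-- Two Drinfeld modules are isomorphic when some isogeny between them lies in `k^×`. -/
def Isomorphic (φ ψ : DrinfeldModule p m Fq k hFq γ r) : Prop :=
  ∃ c : k, c ≠ 0 ∧ ∀ a, ml k c * φ.toRingHom a = ψ.toRingHom a * ml k c

/-- The left ideal `k{τ}·s` of `k{τ}` generated by a subset `s`. -/
def leftSpan (s : Set (AddMonoid.End (Kb k))) : AddSubgroup (AddMonoid.End (Kb k)) :=
  AddSubgroup.closure {y | ∃ w ∈ skewPoly p m Fq k hFq, ∃ x ∈ s, y = w * x}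

/-- `u` generates the left ideal `k{τ}·s` of `k{τ}`: `k{τ}s = k{τ}u`.
(Such a `u = u_I` exists by the right division algorithm in `k{τ}`.) -/
def IsIdealGen (s : Set (AddMonoid.End (Kb k))) (u : AddMonoid.End (Kb k)) : Prop :=
  u ∈ skewPoly p m Fq k hFq ∧
    (leftSpan p m Fq k hFq s : Set (AddMonoid.End (Kb k))) =
      {y | ∃ w ∈ skewPoly p m Fq k hFq, y = w * u}

/-- `I` is an ideal of the (commutative) subring `E` of `k{τ}`. -/
def IsIdealOf (E : Subring (AddMonoid.End (Kb k))) (I : Set (AddMonoid.End (Kb k))) : Prop :=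
  I ⊆ E ∧ (0 : AddMonoid.End (Kb k)) ∈ I ∧
    (∀ x ∈ I, ∀ y ∈ I, x + y ∈ I) ∧ (∀ x ∈ I, -x ∈ I) ∧
    (∀ e ∈ E, ∀ x ∈ I, e * x ∈ I) ∧ (∀ e ∈ E, ∀ x ∈ I, x * e ∈ I)

/-- Membership in `D = End_k(φ) ⊗_A F = Frac(End_k(φ))` for an element of `k{τ}`:
`x ∈ D` iff `x·φ_a ∈ End_k(φ)` for some nonzero `a ∈ A`, i.e. `x = e/φ_a`. -/
def MemD (φ : DrinfeldModule p m Fq k hFq γ r) (x : AddMonoid.End (Kb k)) : Prop :=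
  ∃ a : Polynomial Fq, a ≠ 0 ∧ x * φ.toRingHom a ∈ EndRing p m Fq k hFq φ

/-- `I` is a kernel ideal: `(k{τ}I) ∩ D = I`. -/
def IsKernelIdeal (φ : DrinfeldModule p m Fq k hFq γ r)
    (I : Set (AddMonoid.End (Kb k))) : Prop :=
  {x | x ∈ leftSpan p m Fq k hFq I ∧ MemD p m Fq k hFq φ x} = I

/-- The subring `A[π] = φ(A)[π]` of `k{τ}`, where `π = τ^n` is the Frobenius of `k`. -/
def ApirOp (n : ℕ) (φ : DrinfeldModule p m Fq k hFq γ r) :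
    Subring (AddMonoid.End (Kb k)) :=
  Subring.closure (insert (tau p m Fq k hFq ^ n) (Set.range ⇑φ.toRingHom))

/-- `φ` has height `H` (relative to the monic generator `P` of `𝔭 = ker γ`):
the smallest `τ`-degree of a nonzero term of `φ_P` equals `H · deg P`, i.e. `φ_P` is
right-divisible by `τ^{H·deg P}` but not by `τ^{H·deg P + 1}`. -/
def HasHeight (φ : DrinfeldModule p m Fq k hFq γ r) (P : Polynomial Fq) (H : ℕ) : Prop :=
  (∃ u ∈ skewPoly p m Fq k hFq,
      φ.toRingHom P = u * tau p m Fq k hFq ^ (H * P.natDegree)) ∧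
    ¬∃ u ∈ skewPoly p m Fq k hFq,
      φ.toRingHom P = u * tau p m Fq k hFq ^ (H * P.natDegree + 1)

/-- `I = J·u` for some nonzero `u ∈ D = Frac(E)`, written as `u = e/φ_a` with `e ∈ E`,
`a ∈ A` both nonzero; equivalently `I·φ_a = J·e`. -/
def LinEquiv (φ : DrinfeldModule p m Fq k hFq γ r) (E : Subring (AddMonoid.End (Kb k)))
    (I J : Set (AddMonoid.End (Kb k))) : Prop :=
  ∃ e ∈ E, e ≠ 0 ∧ ∃ a : Polynomial Fq, a ≠ 0 ∧
    (fun x => x * φ.toRingHom a) '' I = (fun y => y * e) '' J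

/-- The additive polynomial `u(X) ∈ k[X]` attached to `u ∈ k{τ}` (the unique polynomial
inducing `u` on the algebraic closure, if it exists; junk value `0` otherwise). -/
def toPoly (u : AddMonoid.End (Kb k)) : Polynomial k :=
  letI := Classical.propDecidable (∃ P : Polynomial k, ∀ x : Kb k, Polynomial.aeval x P = u x)
  if h : ∃ P : Polynomial k, ∀ x : Kb k, Polynomial.aeval x P = u x then h.choose else 0

end Drinfeld

namespace Drinfeld


section Aux
set_option linter.unusedSectionVars false

variable (p m : ℕ) [Fact p.Prime]
variable (Fq k : Type) [Field Fq] [Fintype Fq] [Field k] [Fintype k] [CharP k p]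
variable (hFq : Fintype.card Fq = p ^ m)

lemma end_mul_apply (f g : AddMonoid.End (Kb k)) (x : Kb k) : (f * g) x = f (g x) := rfl

lemma tau_apply (x : Kb k) : tau p m Fq k hFq x = x ^ Fintype.card Fq := rfl

lemma ml_apply (c : k) (x : Kb k) : ml k c x = algebraMap k (Kb k) c * x := rfl

lemma tau_pow_apply (j : ℕ) (x : Kb k) :
    (tau p m Fq k hFq ^ j) x = x ^ Fintype.card Fq ^ j := by
  induction j generalizing x with
  | zero => simp [AddMonoid.End.one_apply]
  | succ n ih =>
    rw [pow_succ, end_mul_apply, tau_apply, ih, ← pow_mul, pow_succ']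

lemma end_ext {f g : AddMonoid.End (Kb k)} (h : ∀ x, f x = g x) : f = g :=
  DFunLike.ext f g h

lemma ml_zero : ml k (0 : k) = 0 := by
  apply end_ext; intro x; simp [ml_apply]

lemma ml_one : ml k (1 : k) = 1 := by
  apply end_ext; intro x; simp [ml_apply, AddMonoid.End.one_apply]

lemma ml_add (a b : k) : ml k (a + b) = ml k a + ml k b := by
  apply end_ext; intro x
  show _ = ml k a x + ml k b x
  simp [ml_apply, add_mul]

lemma ml_neg (a : k) : ml k (-a) = - ml k a := by
  apply end_ext; intro x
  show _ = - (ml k a x)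
  simp [ml_apply]

lemma mono_apply (a : k) (i : ℕ) (x : Kb k) :
    (ml k a * tau p m Fq k hFq ^ i) x
      = algebraMap k (Kb k) a * x ^ Fintype.card Fq ^ i := by
  rw [end_mul_apply, tau_pow_apply, ml_apply]

lemma mono_mul_mono (a b : k) (i j : ℕ) :
    (ml k a * tau p m Fq k hFq ^ i) * (ml k b * tau p m Fq k hFq ^ j)
      = ml k (a * b ^ Fintype.card Fq ^ i) * tau p m Fq k hFq ^ (i + j) := by
  apply end_ext; intro x
  rw [end_mul_apply, mono_apply, mono_apply, mono_apply, mul_pow, ← pow_mul,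
    map_mul, map_pow, pow_add, pow_mul]
  ring

/-- `ofCoeffs` as an additive monoid hom. -/
def OC : (ℕ →₀ k) →+ AddMonoid.End (Kb k) :=
  Finsupp.liftAddHom (fun i =>
    { toFun := fun a => ml k a * tau p m Fq k hFq ^ i
      map_zero' := by show ml k (0:k) * _ = 0; rw [ml_zero, zero_mul]
      map_add' := fun a b => by show ml k (a+b) * _ = _; rw [ml_add, add_mul] })

lemma ofCoeffs_eq_OC (c : ℕ →₀ k) :
    ofCoeffs p m Fq k hFq c = OC p m Fq k hFq c := rfl

lemma ofCoeffs_zero : ofCoeffs p m Fq k hFq 0 = 0 := map_zero (OC p m Fq k hFq)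

lemma ofCoeffs_add (c d : ℕ →₀ k) :
    ofCoeffs p m Fq k hFq (c + d) = ofCoeffs p m Fq k hFq c + ofCoeffs p m Fq k hFq d :=
  map_add (OC p m Fq k hFq) c d

lemma ofCoeffs_sub (c d : ℕ →₀ k) :
    ofCoeffs p m Fq k hFq (c - d) = ofCoeffs p m Fq k hFq c - ofCoeffs p m Fq k hFq d :=
  map_sub (OC p m Fq k hFq) c d

lemma ofCoeffs_single (i : ℕ) (a : k) :
    ofCoeffs p m Fq k hFq (Finsupp.single i a) = ml k a * tau p m Fq k hFq ^ i := by
  rw [ofCoeffs_eq_OC]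
  exact Finsupp.liftAddHom_apply_single _ _ _

lemma ofCoeffs_mem (c : ℕ →₀ k) :
    ofCoeffs p m Fq k hFq c ∈ skewPoly p m Fq k hFq := by
  apply Subring.sum_mem
  intro i _
  exact mul_mem
    (Subring.subset_closure (Set.mem_insert_iff.mpr (Or.inr ⟨c i, rfl⟩)))
    (pow_mem (Subring.subset_closure (Set.mem_insert_iff.mpr (Or.inl rfl))) i)


/-- Coefficients of `(ml a τ^e) * ofCoeffs d`. -/
def tw (a : k) (e : ℕ) (d : ℕ →₀ k) : ℕ →₀ k :=
  d.sum fun j b => Finsupp.single (e + j) (a * b ^ Fintype.card Fq ^ e)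

lemma tw_apply (a : k) (e : ℕ) (d : ℕ →₀ k) (n : ℕ) :
    tw Fq k a e d n = if e ≤ n then a * (d (n - e)) ^ Fintype.card Fq ^ e else 0 := by
  classical
  rw [tw, Finsupp.sum_apply]
  by_cases h : e ≤ n
  · rw [if_pos h]
    have : ∀ j b, (Finsupp.single (e + j) (a * b ^ Fintype.card Fq ^ e)) n
        = if j = n - e then a * b ^ Fintype.card Fq ^ e else 0 := by
      intro j b
      rw [Finsupp.single_apply]
      congr 1
      simp only [eq_iff_iff]
      omega
    rw [Finsupp.sum]
    simp only [this]
    rw [Finset.sum_ite_eq' d.support (n - e)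
        (fun j => a * (d j) ^ Fintype.card Fq ^ e)]
    by_cases hmem : n - e ∈ d.support
    · rw [if_pos hmem]
    · rw [if_neg hmem, Finsupp.notMem_support_iff.mp hmem, zero_pow, mul_zero]
      exact pow_ne_zero _ Fintype.card_ne_zero
  · rw [if_neg h, Finsupp.sum]
    apply Finset.sum_eq_zero
    intro j _
    rw [Finsupp.single_apply, if_neg (by omega)]

lemma mono_mul_ofCoeffs (a : k) (e : ℕ) (d : ℕ →₀ k) :
    (ml k a * tau p m Fq k hFq ^ e) * ofCoeffs p m Fq k hFq d
      = ofCoeffs p m Fq k hFq (tw Fq k a e d) := by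
  rw [tw]
  conv_rhs => rw [ofCoeffs_eq_OC]
  rw [map_finsuppSum, ofCoeffs, Finsupp.sum, Finsupp.sum, Finset.mul_sum]
  apply Finset.sum_congr rfl
  intro j _
  rw [mono_mul_mono]
  exact (ofCoeffs_single p m Fq k hFq _ _).symm

lemma ofCoeffs_mul (c d : ℕ →₀ k) :
    ∃ e : ℕ →₀ k, ofCoeffs p m Fq k hFq c * ofCoeffs p m Fq k hFq d
      = ofCoeffs p m Fq k hFq e := by
  classical
  induction c using Finsupp.induction with
  | zero => exact ⟨0, by rw [ofCoeffs_zero, zero_mul]⟩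
  | single_add i a c' _ _ ih =>
    obtain ⟨e', he'⟩ := ih
    refine ⟨tw Fq k a i d + e', ?_⟩
    rw [ofCoeffs_add, ofCoeffs_add, add_mul, ofCoeffs_single, mono_mul_ofCoeffs, he']

lemma exists_coeffs {u : AddMonoid.End (Kb k)} (hu : u ∈ skewPoly p m Fq k hFq) :
    ∃ c, u = ofCoeffs p m Fq k hFq c := by
  let R : Subring (AddMonoid.End (Kb k)) :=
    { carrier := Set.range (ofCoeffs p m Fq k hFq)
      zero_mem' := ⟨0, ofCoeffs_zero p m Fq k hFq⟩
      one_mem' := ⟨Finsupp.single 0 1, by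
        rw [ofCoeffs_single, ml_one, pow_zero, one_mul]⟩
      add_mem' := by rintro _ _ ⟨c, rfl⟩ ⟨d, rfl⟩; exact ⟨c + d, ofCoeffs_add p m Fq k hFq c d⟩
      neg_mem' := by
        rintro _ ⟨c, rfl⟩
        exact ⟨-c, map_neg (OC p m Fq k hFq) c⟩
      mul_mem' := by
        rintro _ _ ⟨c, rfl⟩ ⟨d, rfl⟩
        obtain ⟨e, he⟩ := ofCoeffs_mul p m Fq k hFq c d
        exact ⟨e, he.symm⟩ }
  have hle : skewPoly p m Fq k hFq ≤ R := by
    rw [skewPoly, Subring.closure_le]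
    rintro x hx
    rcases Set.mem_insert_iff.mp hx with rfl | ⟨c, rfl⟩
    · exact ⟨Finsupp.single 1 1, by rw [ofCoeffs_single, ml_one, pow_one, one_mul]⟩
    · exact ⟨Finsupp.single 0 c, by rw [ofCoeffs_single, pow_zero, mul_one]⟩
  obtain ⟨c, hc⟩ := hle hu
  exact ⟨c, hc.symm⟩

/-- The ordinary polynomial over `Kb k` inducing `ofCoeffs c`. -/
def PofCoeffs (c : ℕ →₀ k) : Polynomial (Kb k) :=
  c.sum fun i a => Polynomial.C (algebraMap k (Kb k) a) * Polynomial.X ^ (Fintype.card Fq ^ i)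

lemma eval_PofCoeffs (c : ℕ →₀ k) (x : Kb k) :
    (PofCoeffs Fq k c).eval x = ofCoeffs p m Fq k hFq c x := by
  rw [PofCoeffs, ofCoeffs, Finsupp.sum, Finsupp.sum, Polynomial.eval_finset_sum]
  erw [AddMonoidHom.finset_sum_apply]
  apply Finset.sum_congr rfl
  intro i _
  erw [mono_apply]
  rw [Polynomial.eval_mul, Polynomial.eval_C, Polynomial.eval_pow,
    Polynomial.eval_X]

lemma ofCoeffs_eq_zero {c : ℕ →₀ k} (h : ofCoeffs p m Fq k hFq c = 0) : c = 0 := by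
  classical
  have hP : PofCoeffs Fq k c = 0 := by
    apply Polynomial.funext
    intro x
    rw [eval_PofCoeffs p m Fq k hFq, h]
    simp [AddMonoid.End.zero_apply]
  ext i
  have hco := congrArg (fun P => Polynomial.coeff P (Fintype.card Fq ^ i)) hP
  simp only [Polynomial.coeff_zero] at hco
  rw [PofCoeffs, Finsupp.sum, Polynomial.finset_sum_coeff] at hco
  have hinj : Function.Injective (fun j : ℕ => Fintype.card Fq ^ j) :=
    Nat.pow_right_injective Fintype.one_lt_card
  have hsimp : ∀ j ∈ c.support,
      (Polynomial.C (algebraMap k (Kb k) (c j)) * Polynomial.X ^ (Fintype.card Fq ^ j)).coeff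
        (Fintype.card Fq ^ i)
      = if j = i then algebraMap k (Kb k) (c j) else 0 := by
    intro j _
    rw [Polynomial.coeff_C_mul, Polynomial.coeff_X_pow]
    by_cases hji : j = i
    · rw [if_pos hji, if_pos (by rw [hji]), mul_one]
    · rw [if_neg hji, if_neg (fun hc => hji (hinj hc).symm), mul_zero]
  rw [Finset.sum_congr rfl hsimp, Finset.sum_ite_eq' c.support i
    (fun j => algebraMap k (Kb k) (c j))] at hco
  have hci : c i = 0 := by
    by_cases hmem : i ∈ c.support
    · rw [if_pos hmem] at hco
      apply (algebraMap k (Kb k)).injective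
      rw [hco, map_zero]
    · exact Finsupp.notMem_support_iff.mp hmem
  simp [hci]

lemma skew_surjective {u : AddMonoid.End (Kb k)} (hu : u ∈ skewPoly p m Fq k hFq)
    (h0 : u ≠ 0) : Function.Surjective u := by
  obtain ⟨c, rfl⟩ := exists_coeffs p m Fq k hFq hu
  set P := PofCoeffs Fq k c with hPdef
  have hev : ∀ x, P.eval x = ofCoeffs p m Fq k hFq c x := eval_PofCoeffs p m Fq k hFq c
  have hP0 : P ≠ 0 := by
    intro h
    apply h0
    apply end_ext k
    intro x
    rw [← hev, h]
    simp [AddMonoid.End.zero_apply]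
  have hd : P.natDegree ≠ 0 := by
    intro h
    have hC := Polynomial.eq_C_of_natDegree_eq_zero h
    have h00 : P.coeff 0 = 0 := by
      rw [Polynomial.coeff_zero_eq_eval_zero, hev 0, map_zero]
    rw [h00] at hC
    rw [hC] at hP0
    exact hP0 (map_zero Polynomial.C)
  intro y
  set Q := P - Polynomial.C y with hQ
  have hQdeg : Q.natDegree ≠ 0 := by rw [hQ, Polynomial.natDegree_sub_C]; exact hd
  have hQd : Q.degree ≠ 0 := fun hdeg => hQdeg (by
    rw [Polynomial.natDegree, hdeg]; rfl)
  obtain ⟨x, hx⟩ := IsAlgClosed.exists_root Q hQd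
  refine ⟨x, ?_⟩
  have : P.eval x - y = 0 := by
    rw [Polynomial.IsRoot, hQ, Polynomial.eval_sub, Polynomial.eval_C] at hx
    exact hx
  rw [← hev, sub_eq_zero.mp this]

lemma cancel_right {g f f' : AddMonoid.End (Kb k)} (hg : Function.Surjective g)
    (h : f * g = f' * g) : f = f' := by
  apply end_ext k
  intro z
  obtain ⟨x, rfl⟩ := hg z
  have := DFunLike.congr_fun h x
  rwa [end_mul_apply, end_mul_apply] at this

lemma left_zero_of_mul {g f : AddMonoid.End (Kb k)} (hg : Function.Surjective g)
    (h : f * g = 0) : f = 0 :=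
  cancel_right k hg (by rw [h, zero_mul])


lemma div_rem (g : ℕ →₀ k) (dg : ℕ) (hgd : g dg ≠ 0) (hgtop : ∀ j, dg < j → g j = 0) :
    ∀ n (f : ℕ →₀ k), (∀ j, n ≤ j → f j = 0) →
      ∃ qc rc : ℕ →₀ k,
        ofCoeffs p m Fq k hFq f
          = ofCoeffs p m Fq k hFq qc * ofCoeffs p m Fq k hFq g + ofCoeffs p m Fq k hFq rc
        ∧ ∀ j, dg ≤ j → rc j = 0 := by
  intro n
  induction n using Nat.strong_induction_on with
  | _ n IH =>
    intro f hf
    by_cases hn : n ≤ dg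
    · refine ⟨0, f, by rw [ofCoeffs_zero, zero_mul, zero_add], fun j hj => hf j (le_trans hn hj)⟩
    · push_neg at hn
      by_cases hl : f (n - 1) = 0
      · exact IH (n - 1) (by omega) f (fun j hj => by
          rcases eq_or_lt_of_le hj with h | h
          · rw [← h]; exact hl
          · exact hf j (by omega))
      · set e := n - 1 - dg with he
        set a := f (n - 1) * ((g dg ^ Fintype.card Fq ^ e)⁻¹) with ha
        set t := tw Fq k a e g with ht
        have hq0 : (Fintype.card Fq : ℕ) ^ e ≠ 0 := pow_ne_zero _ Fintype.card_ne_zero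
        have hts : ∀ j, n - 1 ≤ j → (f - t) j = 0 := by
          intro j hj
          rw [Finsupp.sub_apply]
          rcases eq_or_lt_of_le hj with h | h
          · have hje : e ≤ j := by omega
            have hje2 : j - e = dg := by omega
            rw [tw_apply, if_pos hje, hje2, ha, ← h]
            field_simp
            simp
          · have hfj : f j = 0 := hf j (by omega)
            have htj : t j = 0 := by
              rw [ht, tw_apply]
              by_cases hje : e ≤ j
              · rw [if_pos hje, hgtop (j - e) (by omega), zero_pow hq0, mul_zero]
              · rw [if_neg hje]
            rw [hfj, htj, sub_zero]
        obtain ⟨qc, rc, hq, hr⟩ := IH (n - 1) (by omega) (f - t) hts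
        refine ⟨qc + Finsupp.single e a, rc, ?_, hr⟩
        have hft : ofCoeffs p m Fq k hFq f
            = ofCoeffs p m Fq k hFq (f - t) + ofCoeffs p m Fq k hFq t := by
          rw [← ofCoeffs_add]; congr 1; abel
        rw [hft, hq, ofCoeffs_add, add_mul, ofCoeffs_single, ht, mono_mul_ofCoeffs]
        abel

lemma div_any (g : ℕ →₀ k) (dg : ℕ) (hgd : g dg ≠ 0) (hgtop : ∀ j, dg < j → g j = 0)
    (f : ℕ →₀ k) :
    ∃ qc rc : ℕ →₀ k,
      ofCoeffs p m Fq k hFq f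
        = ofCoeffs p m Fq k hFq qc * ofCoeffs p m Fq k hFq g + ofCoeffs p m Fq k hFq rc
      ∧ ∀ j, dg ≤ j → rc j = 0 := by
  apply div_rem p m Fq k hFq g dg hgd hgtop (f.support.sup id + 1) f
  intro j hj
  by_contra hfj
  have : j ∈ f.support := Finsupp.mem_support_iff.mpr hfj
  have := Finset.le_sup (f := id) this
  simp only [id] at this
  omega

lemma phi_mem_skew {γ : Polynomial Fq →+* k} {r : ℕ} (φ : DrinfeldModule p m Fq k hFq γ r)
    (a : Polynomial Fq) : φ.toRingHom a ∈ skewPoly p m Fq k hFq := by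
  rw [φ.eq_ofCoeffs]
  exact ofCoeffs_mem p m Fq k hFq _

lemma phi_mem_End {γ : Polynomial Fq →+* k} {r : ℕ} (φ : DrinfeldModule p m Fq k hFq γ r)
    (a : Polynomial Fq) : φ.toRingHom a ∈ EndRing p m Fq k hFq φ := by
  rw [EndRing, Subring.mem_inf]
  refine ⟨phi_mem_skew p m Fq k hFq φ a, Subring.mem_centralizer_iff.mpr ?_⟩
  rintro z ⟨b, rfl⟩
  rw [← map_mul, ← map_mul, mul_comm]

lemma phi_ne_zero {γ : Polynomial Fq →+* k} {r : ℕ} (φ : DrinfeldModule p m Fq k hFq γ r)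
    {a : Polynomial Fq} (ha : a ≠ 0) : φ.toRingHom a ≠ 0 := by
  rw [φ.eq_ofCoeffs]
  intro h
  have hc := ofCoeffs_eq_zero p m Fq k hFq h
  apply φ.coeff_top a ha
  rw [hc]
  rfl

lemma exists_dual {γ : Polynomial Fq →+* k} {r : ℕ} (φ : DrinfeldModule p m Fq k hFq γ r)
    {x0 : AddMonoid.End (Kb k)} (hs : x0 ∈ skewPoly p m Fq k hFq) (h0 : x0 ≠ 0) :
    ∃ a : Polynomial Fq, a ≠ 0 ∧ ∃ v ∈ skewPoly p m Fq k hFq,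
      φ.toRingHom a = v * x0 := by
  classical
  obtain ⟨g, rfl⟩ := exists_coeffs p m Fq k hFq hs
  have hg : g ≠ 0 := by rintro rfl; exact h0 (ofCoeffs_zero p m Fq k hFq)
  have hgsupp : g.support.Nonempty := Finsupp.support_nonempty_iff.mpr hg
  set dg := g.support.max' hgsupp with hdg
  have hgd : g dg ≠ 0 := Finsupp.mem_support_iff.mp (g.support.max'_mem hgsupp)
  have hgtop : ∀ j, dg < j → g j = 0 := by
    intro j hj
    by_contra h
    exact absurd (Finset.le_max' _ j (Finsupp.mem_support_iff.mpr h)) (not_le.mpr hj)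
  have H : ∀ i : ℕ, ∃ qc rc : ℕ →₀ k,
      ofCoeffs p m Fq k hFq (φ.coeffs (Polynomial.X ^ i))
        = ofCoeffs p m Fq k hFq qc * ofCoeffs p m Fq k hFq g + ofCoeffs p m Fq k hFq rc
      ∧ ∀ j, dg ≤ j → rc j = 0 :=
    fun i => div_any p m Fq k hFq g dg hgd hgtop _
  choose qc rc hqr hrc using H
  obtain ⟨i1, i2, hne, heq⟩ :=
    Finite.exists_ne_map_eq_of_infinite (fun i : ℕ => fun j : Fin dg => rc i (j : ℕ))
  have hrr : rc i1 = rc i2 := by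
    ext j
    rcases lt_or_ge j dg with hj | hj
    · exact congrFun heq ⟨j, hj⟩
    · rw [hrc i1 j hj, hrc i2 j hj]
  refine ⟨Polynomial.X ^ i1 - Polynomial.X ^ i2, ?_, ?_⟩
  · intro h
    apply hne
    have := sub_eq_zero.mp h
    have h2 := congrArg Polynomial.natDegree this
    rwa [Polynomial.natDegree_X_pow, Polynomial.natDegree_X_pow] at h2
  · refine ⟨ofCoeffs p m Fq k hFq (qc i1) - ofCoeffs p m Fq k hFq (qc i2),
      sub_mem (ofCoeffs_mem p m Fq k hFq _) (ofCoeffs_mem p m Fq k hFq _), ?_⟩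
    rw [map_sub, φ.eq_ofCoeffs, φ.eq_ofCoeffs, hqr i1, hqr i2, hrr, sub_mul]
    abel

end Aux

/-- Let `I` be a nonzero ideal of the commutative ring `E = End_k(φ)`,
and write `k{τ}I = k{τ}u_I`; let `ψ = I*φ` (so `u_I φ_a = ψ_a u_I`).  Elements
`g ∈ O_I = {g ∈ D : Ig ⊆ I}` of the order of `I` in `D = Frac(E)` are encoded as
fractions `g = e/φ_a` (`e ∈ E`, `0 ≠ a ∈ A`) with `I·e ⊆ I·φ_a`; the relation
`y = u_I g u_I⁻¹` is encoded as `y·(u_I·φ_a) = u_I·e`.  Then: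
(1) `u_I O_I u_I⁻¹ ⊆ End_k(I*φ)`;
(2) if `I` is a kernel ideal, `End_k(I*φ) ⊆ u_I O_I u_I⁻¹` as well, i.e. equality holds. -/
theorem statement15
    (p m : ℕ) [Fact p.Prime] (Fq k : Type) [Field Fq] [Fintype Fq]
    [Field k] [Fintype k] [CharP k p] (hFq : Fintype.card Fq = p ^ m)
    (γ : Polynomial Fq →+* k) (r : ℕ) (φ : DrinfeldModule p m Fq k hFq γ r)
    (hcomm : ∀ x ∈ EndRing p m Fq k hFq φ, ∀ y ∈ EndRing p m Fq k hFq φ, x * y = y * x)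
    (I : Set (AddMonoid.End (Kb k)))
    (hI : IsIdealOf k (EndRing p m Fq k hFq φ) I) (hI0 : I ≠ {0})
    (uI : AddMonoid.End (Kb k)) (ψ : DrinfeldModule p m Fq k hFq γ r)
    (hgen : IsIdealGen p m Fq k hFq I uI)
    (hstar : ∀ a, uI * φ.toRingHom a = ψ.toRingHom a * uI) :
    (∀ e ∈ EndRing p m Fq k hFq φ, ∀ a : Polynomial Fq, a ≠ 0 →
        (∀ x ∈ I, ∃ x' ∈ I, x * e = x' * φ.toRingHom a) →
        ∃ y ∈ EndRing p m Fq k hFq ψ, y * (uI * φ.toRingHom a) = uI * e) ∧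
      (IsKernelIdeal p m Fq k hFq φ I →
        ∀ y ∈ EndRing p m Fq k hFq ψ, ∃ e ∈ EndRing p m Fq k hFq φ,
          ∃ a : Polynomial Fq, a ≠ 0 ∧
            (∀ x ∈ I, ∃ x' ∈ I, x * e = x' * φ.toRingHom a) ∧
            y * (uI * φ.toRingHom a) = uI * e) := by
  classical
  have hspan := hgen.2
  have huIskew := hgen.1
  have hEx : ∃ x1 ∈ I, x1 ≠ (0 : AddMonoid.End (Kb k)) := by
    by_contra h
    push_neg at h
    exact hI0 (Set.eq_singleton_iff_unique_mem.mpr ⟨hI.2.1, h⟩)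
  have mem_uI : ∀ x ∈ I, ∃ w ∈ skewPoly p m Fq k hFq, x = w * uI := by
    intro x hx
    have hx1 : x ∈ (leftSpan p m Fq k hFq I : Set (AddMonoid.End (Kb k))) :=
      AddSubgroup.subset_closure ⟨1, one_mem _, x, hx, (one_mul x).symm⟩
    rwa [hspan] at hx1
  obtain ⟨x1, hx1I, hx1⟩ := hEx
  have huI0 : uI ≠ 0 := by
    obtain ⟨w, hw, hxw⟩ := mem_uI x1 hx1I
    rintro rfl
    rw [mul_zero] at hxw
    exact hx1 hxw
  have hsurj_uI : Function.Surjective uI := skew_surjective p m Fq k hFq huIskew huI0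
  have memE_skew : ∀ {z}, z ∈ EndRing p m Fq k hFq φ → z ∈ skewPoly p m Fq k hFq := by
    intro z hz
    rw [EndRing, Subring.mem_inf] at hz
    exact hz.1
  have memE_cent : ∀ {z}, z ∈ EndRing p m Fq k hFq φ →
      ∀ b, φ.toRingHom b * z = z * φ.toRingHom b := by
    intro z hz b
    rw [EndRing, Subring.mem_inf] at hz
    exact Subring.mem_centralizer_iff.mp hz.2 _ ⟨b, rfl⟩
  constructor
  · -- Part 1
    intro e he a ha hOI
    have hφa0 : φ.toRingHom a ≠ 0 := phi_ne_zero p m Fq k hFq φ ha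
    have hφaskew := phi_mem_skew p m Fq k hFq φ a
    have hsurj_φa := skew_surjective p m Fq k hFq hφaskew hφa0
    have hsurjg : Function.Surjective ⇑(uI * φ.toRingHom a) := by
      have hco : ⇑(uI * φ.toRingHom a) = ⇑uI ∘ ⇑(φ.toRingHom a) := rfl
      rw [hco]
      exact hsurj_uI.comp hsurj_φa
    have hkey : ∃ v ∈ leftSpan p m Fq k hFq I, v * φ.toRingHom a = uI * e := by
      have hle : leftSpan p m Fq k hFq I ≤
          (AddSubgroup.map (AddMonoidHom.mulRight (φ.toRingHom a))
            (leftSpan p m Fq k hFq I)).comap (AddMonoidHom.mulRight e) := by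
        rw [leftSpan]
        refine (AddSubgroup.closure_le _).mpr ?_
        rintro z ⟨w, hw, x, hx, rfl⟩
        simp only [SetLike.mem_coe, AddSubgroup.mem_comap, AddMonoidHom.coe_mulRight]
        obtain ⟨x', hx', hxe⟩ := hOI x hx
        apply AddSubgroup.mem_map.mpr
        refine ⟨w * x', AddSubgroup.subset_closure ⟨w, hw, x', hx', rfl⟩, ?_⟩
        show w * x' * φ.toRingHom a = w * x * e
        rw [mul_assoc, ← hxe, mul_assoc]
      have huImem : uI ∈ leftSpan p m Fq k hFq I := by
        have h1 : uI ∈ {y | ∃ w ∈ skewPoly p m Fq k hFq, y = w * uI} :=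
          ⟨1, one_mem _, (one_mul uI).symm⟩
        rw [← hspan] at h1
        exact h1
      have h2 := hle huImem
      rw [AddSubgroup.mem_comap] at h2
      obtain ⟨v, hv, hveq⟩ := AddSubgroup.mem_map.mp h2
      exact ⟨v, hv, hveq⟩
    obtain ⟨v, hvspan, hveq⟩ := hkey
    have hv2 : v ∈ (leftSpan p m Fq k hFq I : Set (AddMonoid.End (Kb k))) := hvspan
    rw [hspan] at hv2
    obtain ⟨w, hwskew, rfl⟩ := hv2
    have hkey2 : w * (uI * φ.toRingHom a) = uI * e := by rw [← mul_assoc]; exact hveq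
    refine ⟨w, ?_, hkey2⟩
    rw [EndRing, Subring.mem_inf]
    refine ⟨hwskew, Subring.mem_centralizer_iff.mpr ?_⟩
    rintro z ⟨b, rfl⟩
    apply cancel_right k hsurjg
    have hψuI : ψ.toRingHom b * uI = uI * φ.toRingHom b := (hstar b).symm
    have hecomm : φ.toRingHom b * e = e * φ.toRingHom b := memE_cent he b
    have hab : φ.toRingHom b * φ.toRingHom a = φ.toRingHom a * φ.toRingHom b := by
      rw [← map_mul, ← map_mul, mul_comm]
    have hsb : ψ.toRingHom b * (uI * φ.toRingHom a)
        = (uI * φ.toRingHom a) * φ.toRingHom b := by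
      rw [← mul_assoc, hψuI, mul_assoc, hab, ← mul_assoc]
    calc ψ.toRingHom b * w * (uI * φ.toRingHom a)
        = ψ.toRingHom b * (uI * e) := by rw [mul_assoc, hkey2]
      _ = uI * φ.toRingHom b * e := by rw [← mul_assoc, hψuI]
      _ = uI * (e * φ.toRingHom b) := by rw [mul_assoc, hecomm]
      _ = (uI * e) * φ.toRingHom b := by rw [← mul_assoc]
      _ = (w * (uI * φ.toRingHom a)) * φ.toRingHom b := by rw [hkey2]
      _ = w * (ψ.toRingHom b * (uI * φ.toRingHom a)) := by rw [mul_assoc, ← hsb]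
      _ = w * ψ.toRingHom b * (uI * φ.toRingHom a) := by rw [← mul_assoc]
  · -- Part 2
    intro hker y hy
    rw [IsKernelIdeal] at hker
    have hyskew : y ∈ skewPoly p m Fq k hFq := by
      rw [EndRing, Subring.mem_inf] at hy
      exact hy.1
    have hycent : ∀ b, ψ.toRingHom b * y = y * ψ.toRingHom b := by
      intro b
      rw [EndRing, Subring.mem_inf] at hy
      exact Subring.mem_centralizer_iff.mp hy.2 _ ⟨b, rfl⟩
    have hφaskewAll : ∀ b : Polynomial Fq, φ.toRingHom b ∈ skewPoly p m Fq k hFq :=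
      phi_mem_skew p m Fq k hFq φ
    have hwcomm : ∀ x ∈ I, ∀ w, x = w * uI → ∀ b,
        w * ψ.toRingHom b = φ.toRingHom b * w := by
      intro x hx w hxw b
      apply cancel_right k hsurj_uI
      have hxc : φ.toRingHom b * x = x * φ.toRingHom b := memE_cent (hI.1 hx) b
      calc w * ψ.toRingHom b * uI
          = w * (uI * φ.toRingHom b) := by rw [mul_assoc, ← hstar b]
        _ = x * φ.toRingHom b := by rw [← mul_assoc, ← hxw]
        _ = φ.toRingHom b * x := hxc.symm
        _ = φ.toRingHom b * w * uI := by rw [hxw, ← mul_assoc]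
    have hθmem : ∀ x ∈ I, ∀ w ∈ skewPoly p m Fq k hFq, x = w * uI →
        w * (y * uI) ∈ I := by
      intro x hx w hw hxw
      have hskew : w * (y * uI) ∈ skewPoly p m Fq k hFq :=
        mul_mem hw (mul_mem hyskew huIskew)
      have hcent : ∀ b, φ.toRingHom b * (w * (y * uI))
          = (w * (y * uI)) * φ.toRingHom b := by
        intro b
        calc φ.toRingHom b * (w * (y * uI))
            = (φ.toRingHom b * w) * (y * uI) := by rw [← mul_assoc]
          _ = (w * ψ.toRingHom b) * (y * uI) := by rw [← hwcomm x hx w hxw b]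
          _ = w * ((ψ.toRingHom b * y) * uI) := by
              rw [mul_assoc, ← mul_assoc (ψ.toRingHom b)]
          _ = w * ((y * ψ.toRingHom b) * uI) := by rw [hycent b]
          _ = w * (y * (uI * φ.toRingHom b)) := by rw [mul_assoc, ← hstar b]
          _ = (w * (y * uI)) * φ.toRingHom b := by simp only [mul_assoc]
      have hEnd : w * (y * uI) ∈ EndRing p m Fq k hFq φ := by
        rw [EndRing, Subring.mem_inf]
        refine ⟨hskew, Subring.mem_centralizer_iff.mpr ?_⟩
        rintro z ⟨b, rfl⟩
        exact hcent b
      have hspanmem : w * (y * uI) ∈ (leftSpan p m Fq k hFq I :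
          Set (AddMonoid.End (Kb k))) := by
        rw [hspan]
        exact ⟨w * y, mul_mem hw hyskew, by rw [mul_assoc]⟩
      have hmem : w * (y * uI) ∈
          {x | x ∈ leftSpan p m Fq k hFq I ∧ MemD p m Fq k hFq φ x} :=
        ⟨hspanmem, 1, one_ne_zero, by rw [map_one, mul_one]; exact hEnd⟩
      rwa [hker] at hmem
    obtain ⟨w0, hw0s, hx0w⟩ := mem_uI x1 hx1I
    have hx0E := hI.1 hx1I
    have hx0skew : x1 ∈ skewPoly p m Fq k hFq := memE_skew hx0E
    obtain ⟨a, ha, v, hvskew, hva⟩ := exists_dual p m Fq k hFq φ hx0skew hx1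
    have hφaskew := phi_mem_skew p m Fq k hFq φ a
    have hsurj_x0 : Function.Surjective x1 := skew_surjective p m Fq k hFq hx0skew hx1
    have hvcent : ∀ b, φ.toRingHom b * v = v * φ.toRingHom b := by
      intro b
      apply cancel_right k hsurj_x0
      have hx0c := memE_cent hx0E b
      have hab : φ.toRingHom b * φ.toRingHom a = φ.toRingHom a * φ.toRingHom b := by
        rw [← map_mul, ← map_mul, mul_comm]
      calc φ.toRingHom b * v * x1
          = φ.toRingHom b * φ.toRingHom a := by rw [mul_assoc, ← hva]
        _ = φ.toRingHom a * φ.toRingHom b := hab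
        _ = v * (x1 * φ.toRingHom b) := by rw [hva, mul_assoc]
        _ = v * (φ.toRingHom b * x1) := by rw [← hx0c]
        _ = v * φ.toRingHom b * x1 := by rw [← mul_assoc]
    have hvE : v ∈ EndRing p m Fq k hFq φ := by
      rw [EndRing, Subring.mem_inf]
      refine ⟨hvskew, Subring.mem_centralizer_iff.mpr ?_⟩
      rintro z ⟨b, rfl⟩
      exact hvcent b
    have hθ0I : w0 * (y * uI) ∈ I := hθmem x1 hx1I w0 hw0s hx0w
    have hθ0E := hI.1 hθ0I
    have heE : w0 * (y * uI) * v ∈ EndRing p m Fq k hFq φ := mul_mem hθ0E hvE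
    have hK1 : x1 * (w0 * (y * uI) * v) = (w0 * (y * uI)) * φ.toRingHom a := by
      rw [hcomm x1 hx0E _ heE, mul_assoc, ← hva]
    refine ⟨w0 * (y * uI) * v, heE, a, ha, ?_, ?_⟩
    · intro x hx
      obtain ⟨w, hw, hxw⟩ := mem_uI x hx
      refine ⟨w * (y * uI), hθmem x hx w hw hxw, ?_⟩
      have hK2 : x1 * (w * (y * uI)) = x * (w0 * (y * uI)) := by
        have h1 : x1 * w = x * w0 := by
          apply cancel_right k hsurj_uI
          rw [mul_assoc, ← hxw, mul_assoc, ← hx0w]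
          exact hcomm x1 hx0E x (hI.1 hx)
        rw [← mul_assoc, h1, mul_assoc]
      have h2 : x1 * (x * (w0 * (y * uI) * v))
          = x1 * (w * (y * uI) * φ.toRingHom a) := by
        calc x1 * (x * (w0 * (y * uI) * v))
            = x * (x1 * (w0 * (y * uI) * v)) := by
              rw [← mul_assoc, hcomm x1 hx0E x (hI.1 hx), mul_assoc]
          _ = x * ((w0 * (y * uI)) * φ.toRingHom a) := by rw [hK1]
          _ = (x * (w0 * (y * uI))) * φ.toRingHom a := by rw [← mul_assoc]
          _ = (x1 * (w * (y * uI))) * φ.toRingHom a := by rw [← hK2]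
          _ = x1 * (w * (y * uI) * φ.toRingHom a) := by rw [mul_assoc]
      have h3 : x1 * (x * (w0 * (y * uI) * v) - w * (y * uI) * φ.toRingHom a) = 0 := by
        rw [mul_sub, h2, sub_self]
      rcases eq_or_ne (x * (w0 * (y * uI) * v) - w * (y * uI) * φ.toRingHom a) 0
        with hz | hz
      · exact sub_eq_zero.mp hz
      · exfalso
        have hskewd : x * (w0 * (y * uI) * v) - w * (y * uI) * φ.toRingHom a
            ∈ skewPoly p m Fq k hFq :=
          sub_mem (mul_mem (memE_skew (hI.1 hx)) (memE_skew heE))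
            (mul_mem (mul_mem hw (mul_mem hyskew huIskew)) hφaskew)
        exact hx1 (left_zero_of_mul k (skew_surjective p m Fq k hFq hskewd hz) h3)
    · have t1 : w0 * (y * (uI * φ.toRingHom a)) = w0 * (y * uI) * φ.toRingHom a := by
        simp only [mul_assoc]
      have t2 : w0 * (uI * (w0 * (y * uI) * v)) = x1 * (w0 * (y * uI) * v) := by
        rw [← mul_assoc, ← hx0w]
      have hζ : w0 * (y * (uI * φ.toRingHom a) - uI * (w0 * (y * uI) * v)) = 0 := by
        rw [mul_sub, t1, t2, hK1, sub_self]
      rcases eq_or_ne (y * (uI * φ.toRingHom a) - uI * (w0 * (y * uI) * v)) 0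
        with hz | hz
      · exact sub_eq_zero.mp hz
      · exfalso
        have hskewd : y * (uI * φ.toRingHom a) - uI * (w0 * (y * uI) * v)
            ∈ skewPoly p m Fq k hFq :=
          sub_mem (mul_mem hyskew (mul_mem huIskew hφaskew))
            (mul_mem huIskew (memE_skew heE))
        have hw00 := left_zero_of_mul k (skew_surjective p m Fq k hFq hskewd hz) hζ
        rw [hw00, zero_mul] at hx0w
        exact hx1 hx0w

end Drinfeld
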